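/- arXiv:2101.04561 — 2 statements merged into one kernel-verified Lean document; each statement's English description precedes it below -/
import Mathlib

section
/- Let H be a hypergraph and G its incidence graph. Then H is quasi-eulerian if and only if G has a spanning subgraph G′ such that every e-vertex has degree exactly 2 in G′ and every v-vertex has even degree in G′. -/
open scoped Classical

/-- A hypergraph: a finite nonempty vertex type `V`, a finite index type `E` of
edges (so that repeated edges are allowed, as in a multiset of edges), and a map
`mem` assigning to each edge the finite set of its vertices. -/
structure Hypergraph' where
  V : Type
  E : Type
  [fintypeV : Fintype V]
  [fintypeE : Fintype E]
  [nonemptyV : Nonempty V]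
  mem : E → Finset V

attribute [instance] Hypergraph'.fintypeV Hypergraph'.fintypeE Hypergraph'.nonemptyV

namespace Hypergraph'

/-- A walk `v₀ e₁ v₁ e₂ … e_k v_k` in a hypergraph: consecutive anchors are
distinct and both lie in the connecting edge. -/
structure Walk (H : Hypergraph') where
  k : ℕ
  vtx : Fin (k + 1) → H.V
  edge : Fin k → H.E
  mem_left : ∀ i : Fin k, vtx i.castSucc ∈ H.mem (edge i)
  mem_right : ∀ i : Fin k, vtx i.succ ∈ H.mem (edge i)
  ne : ∀ i : Fin k, vtx i.castSucc ≠ vtx i.succ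

/-- A trail is a walk with pairwise distinct edges. -/
def Walk.IsTrail {H : Hypergraph'} (W : H.Walk) : Prop :=
  Function.Injective W.edge

/-- A closed walk: `v₀ = v_k` and `k ≥ 2`. -/
def Walk.IsClosed {H : Hypergraph'} (W : H.Walk) : Prop :=
  W.vtx 0 = W.vtx (Fin.last W.k) ∧ 2 ≤ W.k

def Walk.IsClosedTrail {H : Hypergraph'} (W : H.Walk) : Prop :=
  W.IsTrail ∧ W.IsClosed

/-- The anchors of a walk. -/
def Walk.anchors {H : Hypergraph'} (W : H.Walk) : Set H.V := Set.range W.vtx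

/-- The set of edges traversed by a walk. -/
def Walk.edgeSet {H : Hypergraph'} (W : H.Walk) : Set H.E := Set.range W.edge

/-- An Euler tour: a closed trail traversing every edge exactly once. -/
def IsEulerTour (H : Hypergraph') (W : H.Walk) : Prop :=
  W.IsClosedTrail ∧ Function.Bijective W.edge

def HasEulerTour (H : Hypergraph') : Prop := ∃ W : H.Walk, H.IsEulerTour W

/-- A hypergraph is eulerian if it has no edges or admits an Euler tour. -/
def IsEulerian (H : Hypergraph') : Prop := IsEmpty H.E ∨ H.HasEulerTour

/-- An Euler family: a set of pairwise anchor-disjoint, edge-disjoint closed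
trails jointly traversing every edge exactly once. -/
def IsEulerFamily (H : Hypergraph') (F : Set H.Walk) : Prop :=
  (∀ W ∈ F, W.IsClosedTrail) ∧
  (∀ W ∈ F, ∀ W' ∈ F, W ≠ W' →
    Disjoint W.anchors W'.anchors ∧ Disjoint W.edgeSet W'.edgeSet) ∧
  (∀ e : H.E, ∃ W ∈ F, e ∈ W.edgeSet)

/-- A hypergraph is quasi-eulerian if it has no edges or admits an Euler family. -/
def IsQuasiEulerian (H : Hypergraph') : Prop :=
  IsEmpty H.E ∨ ∃ F : Set H.Walk, H.IsEulerFamily F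

/-- A minimum Euler family: one with the fewest components. -/
def IsMinEulerFamily (H : Hypergraph') (F : Set H.Walk) : Prop :=
  H.IsEulerFamily F ∧ ∀ F' : Set H.Walk, H.IsEulerFamily F' → F.ncard ≤ F'.ncard

/-- `H` is `k`-uniform if each edge has exactly `k` vertices. -/
def IsUniform (H : Hypergraph') (k : ℕ) : Prop := ∀ e : H.E, (H.mem e).card = k

/-- A covering `k`-hypergraph (`k ≥ 3`): a nonempty `k`-uniform hypergraph in
which every `(k-1)`-subset of the vertex set lies in at least one edge. -/
def IsCovering (H : Hypergraph') (k : ℕ) : Prop :=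
  3 ≤ k ∧ Nonempty H.E ∧ H.IsUniform k ∧
    ∀ S : Finset H.V, S.card = k - 1 → ∃ e : H.E, S ⊆ H.mem e

/-- The incidence graph of a hypergraph: the bipartite simple graph on
`V ⊕ E` joining `v` and `e` exactly when `v ∈ e`. -/
def incidenceGraph (H : Hypergraph') : SimpleGraph (H.V ⊕ H.E) where
  Adj x y :=
    (∃ v e, x = Sum.inl v ∧ y = Sum.inr e ∧ v ∈ H.mem e) ∨
    (∃ v e, x = Sum.inr e ∧ y = Sum.inl v ∧ v ∈ H.mem e)
  symm := by
    constructor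
    rintro x y (⟨v, e, rfl, rfl, h⟩ | ⟨v, e, rfl, rfl, h⟩)
    · exact Or.inr ⟨v, e, rfl, rfl, h⟩
    · exact Or.inl ⟨v, e, rfl, rfl, h⟩
  loopless := by
    constructor
    rintro x (⟨v, e, rfl, h, -⟩ | ⟨v, e, rfl, h, -⟩) <;> exact absurd h (by simp)

/-- `v` and `e` appear consecutively in some trail of the family `F`. -/
def ConsecIn (H : Hypergraph') (F : Set H.Walk) (v : H.V) (e : H.E) : Prop :=
  ∃ W ∈ F, ∃ i : Fin W.k, W.edge i = e ∧ (W.vtx i.castSucc = v ∨ W.vtx i.succ = v)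

/-- The spanning subgraph of the incidence graph corresponding to an Euler
family `F`: its edges are the incident pairs `ve` consecutive in some trail of `F`. -/
def eulerSubgraph (H : Hypergraph') (F : Set H.Walk) : SimpleGraph (H.V ⊕ H.E) where
  Adj x y :=
    (∃ v e, x = Sum.inl v ∧ y = Sum.inr e ∧ H.ConsecIn F v e) ∨
    (∃ v e, x = Sum.inr e ∧ y = Sum.inl v ∧ H.ConsecIn F v e)
  symm := by
    constructor
    rintro x y (⟨v, e, rfl, rfl, h⟩ | ⟨v, e, rfl, rfl, h⟩)
    · exact Or.inr ⟨v, e, rfl, rfl, h⟩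
    · exact Or.inl ⟨v, e, rfl, rfl, h⟩
  loopless := by
    constructor
    rintro x (⟨v, e, rfl, h, -⟩ | ⟨v, e, rfl, h, -⟩) <;> exact absurd h (by simp)

end Hypergraph'

/-- The degree of a vertex of a simple graph (number of neighbours). -/
noncomputable def sdeg {α : Type*} (G : SimpleGraph α) (x : α) : ℕ :=
  (G.neighborSet x).ncard

/-- A connected component of a simple graph is nontrivial if it contains an edge. -/
def NontrivComp {α : Type*} (G : SimpleGraph α) (c : G.ConnectedComponent) : Prop :=
  ∃ x y, G.Adj x y ∧ G.connectedComponentMk x = c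

/-- The number of nontrivial connected components of a simple graph. -/
noncomputable def ntComps {α : Type*} (G : SimpleGraph α) : ℕ :=
  {c : G.ConnectedComponent | NontrivComp G c}.ncard

/-- A cut vertex of a simple graph: a vertex whose deletion increases the number
of connected components, i.e. some two vertices distinct from it are joined by a
walk but by no walk avoiding it. -/
def IsCutVtx {α : Type*} (G : SimpleGraph α) (v : α) : Prop :=
  ∃ x y, x ≠ v ∧ y ≠ v ∧ G.Reachable x y ∧ ¬ ∃ p : G.Walk x y, v ∉ p.support

/-- An `F`-interchanging cycle: a cycle of the incidence graph such that every
e-vertex on it is incident in `G_F` with exactly one edge of the cycle. -/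
def IsInterchanging (H : Hypergraph') (F : Set H.Walk) {x : H.V ⊕ H.E}
    (C : (H.incidenceGraph).Walk x x) : Prop :=
  C.IsCycle ∧ ∀ e : H.E, (Sum.inr e : H.V ⊕ H.E) ∈ C.support →
    ∃! s : Sym2 (H.V ⊕ H.E),
      s ∈ C.edges ∧ (Sum.inr e : H.V ⊕ H.E) ∈ s ∧ s ∈ (H.eulerSubgraph F).edgeSet

/-- The symmetric difference of a simple graph with a set of potential edges. -/
def symmDiffEdges {α : Type*} (G : SimpleGraph α) (s : Set (Sym2 α)) : SimpleGraph α :=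
  SimpleGraph.fromEdgeSet (symmDiff G.edgeSet s)

/-- An `F`-diminishing cycle: an `F`-interchanging cycle `C` such that
`G_F Δ C` has fewer nontrivial connected components than `G_F`. -/
def IsDiminishing (H : Hypergraph') (F : Set H.Walk) {x : H.V ⊕ H.E}
    (C : (H.incidenceGraph).Walk x x) : Prop :=
  IsInterchanging H F C ∧
    ntComps (symmDiffEdges (H.eulerSubgraph F) {s | s ∈ C.edges}) <
      ntComps (H.eulerSubgraph F)


/-!
Given an Euler family, join every e-vertex to the two anchors between which its trail
traverses it. Each e-vertex then has degree 2, and a v-vertex lies on at most one trail, which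
leaves it as often as it enters it, so its degree is even.

Conversely, the two neighbours of each e-vertex turn `H` into a loopless multigraph in which
every vertex has even degree. Such a multigraph splits into anchor-disjoint closed trails:
a longest closed trail contains every edge at each of its anchors, since an unused edge there
lies on a closed trail of the (still even) remainder, which could be spliced in. Remove it and
recurse on the remaining edges.
-/

theorem Nat.exists_max_of_bounded {α : Type*} {P : α → Prop} (f : α → ℕ) (N : ℕ)
    (hN : ∀ a, P a → f a ≤ N) (h : ∃ a, P a) : ∃ a, P a ∧ ∀ b, P b → f b ≤ f a := by
  have hbdd : BddAbove (f '' {a | P a}) := ⟨N, by rintro _ ⟨a, ha, rfl⟩; exact hN a ha⟩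
  have hne : (f '' {a | P a}).Nonempty := h.elim fun a ha => ⟨f a, a, ha, rfl⟩
  obtain ⟨a, ha, hmax⟩ := Nat.sSup_mem hne hbdd
  exact ⟨a, ha, fun b hb => hmax ▸ le_csSup hbdd ⟨b, hb, rfl⟩⟩

/-! A multigraph on `V` with edge set `E` is given by endpoint maps `u w : E → V`. A walk is a
start vertex with a list of darts `(e, b)`, where `(e, true)` runs from `u e` to `w e` and
`(e, false)` back. -/

namespace Multigraph

variable {V E : Type*} (u w : E → V)

def src (d : E × Bool) : V := if d.2 then u d.1 else w d.1

def tgt (d : E × Bool) : V := if d.2 then w d.1 else u d.1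

def IsWalkFrom : V → List (E × Bool) → Prop
  | _, [] => True
  | v, d :: l => src u w d = v ∧ IsWalkFrom (tgt u w d) l

def walkEnd : V → List (E × Bool) → V
  | v, [] => v
  | _, d :: l => walkEnd (tgt u w d) l

noncomputable def edgeFinset (l : List (E × Bool)) : Finset E := (l.map Prod.fst).toFinset

def anchors (v : V) (l : List (E × Bool)) : Set V :=
  Set.range fun i : Fin (l.length + 1) => walkEnd u w v (l.take i)

noncomputable def degree (S : Finset E) (x : V) : ℕ :=
  ∑ e ∈ S, ((if u e = x then 1 else 0) + if w e = x then 1 else 0)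

def IsTrailIn (S : Finset E) (v : V) (l : List (E × Bool)) : Prop :=
  IsWalkFrom u w v l ∧ (l.map Prod.fst).Nodup ∧ edgeFinset l ⊆ S

def IsClosedTrailIn (S : Finset E) (v : V) (l : List (E × Bool)) : Prop :=
  IsTrailIn u w S v l ∧ walkEnd u w v l = v

variable {u w}

section Walks

variable {v : V} {d : E × Bool} {l l₁ l₂ : List (E × Bool)}

@[simp] lemma isWalkFrom_nil : IsWalkFrom u w v [] := trivial

@[simp] lemma isWalkFrom_cons :
    IsWalkFrom u w v (d :: l) ↔ src u w d = v ∧ IsWalkFrom u w (tgt u w d) l := Iff.rfl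

@[simp] lemma walkEnd_nil : walkEnd u w v [] = v := rfl

@[simp] lemma walkEnd_cons : walkEnd u w v (d :: l) = walkEnd u w (tgt u w d) l := rfl

lemma walkEnd_append : walkEnd u w v (l₁ ++ l₂) = walkEnd u w (walkEnd u w v l₁) l₂ := by
  induction l₁ generalizing v <;> simp_all

lemma isWalkFrom_append :
    IsWalkFrom u w v (l₁ ++ l₂) ↔ IsWalkFrom u w v l₁ ∧ IsWalkFrom u w (walkEnd u w v l₁) l₂ := by
  induction l₁ generalizing v <;> simp_all [and_assoc]

lemma src_eq_or (d : E × Bool) : src u w d = u d.1 ∨ src u w d = w d.1 := by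
  unfold src; split <;> simp

lemma tgt_eq_or (d : E × Bool) : tgt u w d = u d.1 ∨ tgt u w d = w d.1 := by
  unfold tgt; split <;> simp

lemma src_ne_tgt (huw : ∀ e, u e ≠ w e) (d : E × Bool) : src u w d ≠ tgt u w d := by
  unfold src tgt; split
  · exact huw d.1
  · exact (huw d.1).symm

lemma exists_src_eq {e : E} {x : V} (h : u e = x ∨ w e = x) : ∃ b, src u w (e, b) = x :=
  h.elim (fun h => ⟨true, h⟩) fun h => ⟨false, h⟩

lemma walkEnd_take_eq_src (hl : IsWalkFrom u w v l) {i : ℕ} (hi : i < l.length) :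
    walkEnd u w v (l.take i) = src u w l[i] := by
  rw [← List.take_append_drop i l, isWalkFrom_append, List.drop_eq_getElem_cons hi] at hl
  exact hl.2.1.symm

lemma walkEnd_take_add_one_eq_tgt {i : ℕ} (hi : i < l.length) :
    walkEnd u w v (l.take (i + 1)) = tgt u w l[i] := by
  rw [List.take_add_one, List.getElem?_eq_getElem hi, Option.toList_some, walkEnd_append]
  rfl

end Walks

section Trails

variable {S T : Finset E} {v x : V} {l l₁ l₂ : List (E × Bool)}

@[simp] lemma edgeFinset_nil : edgeFinset ([] : List (E × Bool)) = ∅ := rfl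

@[simp] lemma edgeFinset_cons (d : E × Bool) (l : List (E × Bool)) :
    edgeFinset (d :: l) = insert d.1 (edgeFinset l) := by
  simp [edgeFinset]

@[simp] lemma edgeFinset_append : edgeFinset (l₁ ++ l₂) = edgeFinset l₁ ∪ edgeFinset l₂ := by
  simp [edgeFinset]

lemma degree_sdiff_add (hTS : T ⊆ S) (x : V) :
    degree u w (S \ T) x + degree u w T x = degree u w S x :=
  Finset.sum_sdiff hTS

lemma exists_incident_of_degree_pos (h : 0 < degree u w S x) : ∃ e ∈ S, u e = x ∨ w e = x := by
  obtain ⟨e, he, hpos⟩ := Finset.sum_pos_iff.1 h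
  refine ⟨e, he, ?_⟩
  by_contra! hne
  simp [hne.1, hne.2] at hpos

/-- The ends of a trail are the only vertices at which it can have odd degree. -/
lemma even_degree_add_ite_add_ite (hl : IsWalkFrom u w v l) (hnd : (l.map Prod.fst).Nodup)
    (x : V) : Even (degree u w (edgeFinset l) x + (if v = x then 1 else 0) +
      if walkEnd u w v l = x then 1 else 0) := by
  induction l generalizing v with
  | nil =>
    simp only [edgeFinset_nil, degree, Finset.sum_empty, walkEnd_nil, zero_add]
    exact ⟨_, rfl⟩
  | cons d l ih =>
    obtain ⟨rfl, hl⟩ := hl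
    rw [List.map_cons, List.nodup_cons] at hnd
    have hd : d.1 ∉ edgeFinset l := by simpa [edgeFinset] using hnd.1
    have hinc : ((if u d.1 = x then 1 else 0) + if w d.1 = x then 1 else 0) =
        ((if src u w d = x then 1 else 0) + if tgt u w d = x then 1 else 0) := by
      rcases d with ⟨e, _ | _⟩ <;> simp [src, tgt, add_comm]
    have := ih hl hnd.2
    rw [edgeFinset_cons, degree, Finset.sum_insert hd, hinc, walkEnd_cons, ← degree]
    rw [Nat.even_iff] at this ⊢
    omega

lemma IsClosedTrailIn.even_degree (h : IsClosedTrailIn u w S v l) (x : V) :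
    Even (degree u w (edgeFinset l) x) := by
  have := even_degree_add_ite_add_ite h.1.1 h.1.2.1 x
  rw [h.2, add_assoc, ← two_mul] at this
  exact (Nat.even_add.1 this).2 (even_two_mul _)

lemma IsTrailIn.odd_degree_walkEnd (h : IsTrailIn u w S v l) (hne : walkEnd u w v l ≠ v) :
    Odd (degree u w (edgeFinset l) (walkEnd u w v l)) := by
  have := even_degree_add_ite_add_ite h.1 h.2.1 (walkEnd u w v l)
  rw [if_neg (Ne.symm hne), if_pos rfl, add_zero] at this
  exact Nat.odd_iff.2 (by rw [Nat.even_iff] at this; omega)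

lemma even_degree_sdiff (hTS : T ⊆ S) (hS : Even (degree u w S x))
    (hT : Even (degree u w T x)) : Even (degree u w (S \ T) x) := by
  rw [← degree_sdiff_add hTS] at hS
  exact (Nat.even_add.1 hS).2 hT

lemma IsTrailIn.length_le (h : IsTrailIn u w S v l) : l.length ≤ S.card := by
  rw [← List.length_map Prod.fst, ← List.toFinset_card_of_nodup h.2.1]
  exact Finset.card_le_card h.2.2

lemma IsTrailIn.append (h₁ : IsTrailIn u w S v l₁) (h₂ : IsTrailIn u w S (walkEnd u w v l₁) l₂)
    (hdisj : Disjoint (edgeFinset l₁) (edgeFinset l₂)) : IsTrailIn u w S v (l₁ ++ l₂) := by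
  refine ⟨isWalkFrom_append.2 ⟨h₁.1, h₂.1⟩, ?_, ?_⟩
  · rw [List.map_append]
    exact h₁.2.1.append h₂.2.1 (List.disjoint_toFinset_iff_disjoint.1 hdisj)
  · rw [edgeFinset_append]
    exact Finset.union_subset h₁.2.2 h₂.2.2

lemma isTrailIn_singleton {d : E × Bool} (hd : d.1 ∈ S) :
    IsTrailIn u w S (src u w d) [d] :=
  ⟨⟨rfl, trivial⟩, List.nodup_singleton _, by simpa using hd⟩

lemma IsTrailIn.exists_incident_walkEnd (hS : ∀ y, Even (degree u w S y))
    (h : IsTrailIn u w S v l) (hne : walkEnd u w v l ≠ v) :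
    ∃ e ∈ S \ edgeFinset l, u e = walkEnd u w v l ∨ w e = walkEnd u w v l := by
  have hsum := hS (walkEnd u w v l)
  rw [← degree_sdiff_add h.2.2, Nat.even_add] at hsum
  have hrest : ¬Even (degree u w (S \ edgeFinset l) (walkEnd u w v l)) :=
    fun h' => Nat.not_even_iff_odd.2 (h.odd_degree_walkEnd hne) (hsum.1 h')
  exact exists_incident_of_degree_pos (Nat.pos_of_ne_zero fun h0 => hrest (h0 ▸ Even.zero))

/-- A longest trail through `e` ends where it started: at any other end its degree is odd, so
an unused edge leaves that end. -/
lemma exists_isClosedTrailIn_of_mem (hS : ∀ y, Even (degree u w S y)) {e : E} (he : e ∈ S)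
    (hx : u e = x ∨ w e = x) : ∃ l, IsClosedTrailIn u w S x l ∧ e ∈ edgeFinset l := by
  obtain ⟨b, rfl⟩ := exists_src_eq (w := w) hx
  obtain ⟨l, ⟨hl, hel⟩, hmax⟩ := Nat.exists_max_of_bounded
    (P := fun l => IsTrailIn u w S (src u w (e, b)) l ∧ e ∈ edgeFinset l) List.length S.card
    (fun l hl => hl.1.length_le) ⟨[(e, b)], isTrailIn_singleton he, by simp⟩
  refine ⟨l, ⟨hl, ?_⟩, hel⟩
  by_contra hne
  obtain ⟨e', he', hinc⟩ := hl.exists_incident_walkEnd hS hne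
  obtain ⟨b', hb'⟩ := exists_src_eq (w := w) hinc
  rw [Finset.mem_sdiff] at he'
  have hlonger := hmax (l ++ [(e', b')])
    ⟨hl.append (hb' ▸ isTrailIn_singleton he'.1) (by simpa using he'.2), by simp [hel]⟩
  simp at hlonger

lemma IsTrailIn.mono (hST : S ⊆ T) (h : IsTrailIn u w S v l) : IsTrailIn u w T v l :=
  ⟨h.1, h.2.1, h.2.2.trans hST⟩

lemma IsClosedTrailIn.mono (hST : S ⊆ T) (h : IsClosedTrailIn u w S v l) :
    IsClosedTrailIn u w T v l :=
  ⟨h.1.mono hST, h.2⟩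

lemma IsClosedTrailIn.rotate (h : IsClosedTrailIn u w S v (l₁ ++ l₂)) :
    IsClosedTrailIn u w S (walkEnd u w v l₁) (l₂ ++ l₁) := by
  obtain ⟨⟨hw, hnd, hsub⟩, hc⟩ := h
  rw [isWalkFrom_append] at hw
  rw [walkEnd_append] at hc
  refine ⟨⟨isWalkFrom_append.2 ⟨hw.2, by rw [hc]; exact hw.1⟩, ?_, ?_⟩, ?_⟩
  · rw [List.map_append] at hnd ⊢
    exact List.nodup_append_comm.1 hnd
  · rw [edgeFinset_append] at hsub ⊢
    rwa [Finset.union_comm]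
  · rw [walkEnd_append, hc]

lemma IsClosedTrailIn.exists_incident_of_mem_anchors (h : IsClosedTrailIn u w S v l)
    (hne : l ≠ []) (hx : x ∈ anchors u w v l) : ∃ e ∈ edgeFinset l, u e = x ∨ w e = x := by
  obtain ⟨i, rfl⟩ := hx
  dsimp only
  obtain ⟨j, hj, hxj⟩ : ∃ j, ∃ hj : j < l.length, walkEnd u w v (l.take i) = src u w l[j] := by
    rcases Nat.lt_or_ge i l.length with hi | hi
    · exact ⟨i, hi, walkEnd_take_eq_src h.1.1 hi⟩
    · have hpos := List.length_pos_iff.2 hne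
      refine ⟨0, hpos, ?_⟩
      rw [List.take_of_length_le hi, h.2, ← walkEnd_take_eq_src h.1.1 hpos, List.take_zero,
        walkEnd_nil]
  rw [hxj]
  exact ⟨l[j].1, List.mem_toFinset.2 (List.mem_map_of_mem (List.getElem_mem hj)),
    (src_eq_or l[j]).imp Eq.symm Eq.symm⟩

lemma IsClosedTrailIn.two_le_length (huw : ∀ e, u e ≠ w e) (h : IsClosedTrailIn u w S v l)
    (hne : l ≠ []) : 2 ≤ l.length := by
  obtain _ | ⟨d, _ | ⟨d', l⟩⟩ := l
  · exact absurd rfl hne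
  · exact absurd (h.1.1.1.trans h.2.symm) (src_ne_tgt huw d)
  · simp

lemma exists_isClosedTrailIn_saturated (hS : ∀ y, Even (degree u w S y)) {e : E} (he : e ∈ S) :
    ∃ v l, IsClosedTrailIn u w S v l ∧ l ≠ [] ∧
      ∀ x ∈ anchors u w v l, ∀ e ∈ S, (u e = x ∨ w e = x) → e ∈ edgeFinset l := by
  obtain ⟨l₀, hl₀, he₀⟩ := exists_isClosedTrailIn_of_mem hS he (Or.inl rfl)
  obtain ⟨⟨v, l⟩, hl, hmax⟩ := Nat.exists_max_of_bounded
    (P := fun p : V × List (E × Bool) => IsClosedTrailIn u w S p.1 p.2) (fun p => p.2.length)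
    S.card (fun p hp => hp.1.length_le) ⟨(u e, l₀), hl₀⟩
  have hl₀pos : 0 < l₀.length := List.length_pos_iff.2 (by rintro rfl; simp at he₀)
  refine ⟨v, l, hl, List.length_pos_iff.1 (hl₀pos.trans_le (hmax (u e, l₀) hl₀)), ?_⟩
  rintro _ ⟨i, rfl⟩ e' he' hinc
  dsimp only at hinc ⊢
  by_contra hnot
  have hrot : IsClosedTrailIn u w S _ (l.drop i ++ l.take i) :=
    IsClosedTrailIn.rotate (by rwa [List.take_append_drop])
  have hE : edgeFinset (l.drop i ++ l.take i) = edgeFinset l := by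
    rw [edgeFinset_append, Finset.union_comm, ← edgeFinset_append, List.take_append_drop]
  obtain ⟨t, ht, he't⟩ := exists_isClosedTrailIn_of_mem
    (fun y => even_degree_sdiff hl.1.2.2 (hS y) (hl.even_degree y))
    (Finset.mem_sdiff.2 ⟨he', hnot⟩) hinc
  have hdisj : Disjoint (edgeFinset (l.drop i ++ l.take i)) (edgeFinset t) := by
    rw [hE]
    exact Finset.disjoint_of_subset_right ht.1.2.2 Finset.disjoint_sdiff
  have hlonger := hmax (_, (l.drop i ++ l.take i) ++ t)
    ⟨hrot.1.append (hrot.2.symm ▸ ht.1.mono Finset.sdiff_subset) hdisj,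
      by rw [walkEnd_append, hrot.2, ht.2]⟩
  have htne : t ≠ [] := by rintro rfl; simp at he't
  simp only [List.length_append, List.length_drop, List.length_take] at hlonger
  have := List.length_pos_iff.2 htne
  omega

theorem exists_closedTrail_decomposition (S : Finset E) (hS : ∀ y, Even (degree u w S y)) :
    ∃ P : Set (V × List (E × Bool)), (∀ p ∈ P, IsClosedTrailIn u w S p.1 p.2 ∧ p.2 ≠ []) ∧
      P.Pairwise (fun p q => Disjoint (anchors u w p.1 p.2) (anchors u w q.1 q.2) ∧
        Disjoint (edgeFinset p.2) (edgeFinset q.2)) ∧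
      ∀ e ∈ S, ∃ p ∈ P, e ∈ edgeFinset p.2 := by
  induction S using Finset.strongInduction with
  | H S ih =>
  rcases S.eq_empty_or_nonempty with rfl | ⟨e, he⟩
  · exact ⟨∅, by simp, Set.pairwise_empty _, by simp⟩
  obtain ⟨v, l, hl, hne, hsat⟩ := exists_isClosedTrailIn_saturated hS he
  have hlt : S \ edgeFinset l ⊂ S := by
    refine Finset.sdiff_ssubset hl.1.2.2 ?_
    obtain ⟨d, l', rfl⟩ := List.exists_cons_of_ne_nil hne
    exact ⟨d.1, by simp⟩
  obtain ⟨P, hP, hPw, hPcov⟩ :=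
    ih _ hlt fun y => even_degree_sdiff hl.1.2.2 (hS y) (hl.even_degree y)
  have hdisj : ∀ q ∈ P, Disjoint (anchors u w v l) (anchors u w q.1 q.2) ∧
      Disjoint (edgeFinset l) (edgeFinset q.2) := by
    intro q hq
    have hqS := (hP q hq).1.1.2.2
    refine ⟨Set.disjoint_left.2 fun x hx hxq => ?_, ?_⟩
    · obtain ⟨e', he'q, hinc⟩ := (hP q hq).1.exists_incident_of_mem_anchors (hP q hq).2 hxq
      obtain ⟨he'S, he'l⟩ := Finset.mem_sdiff.1 (hqS he'q)
      exact he'l (hsat x hx e' he'S hinc)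
    · exact Finset.disjoint_of_subset_right hqS Finset.sdiff_disjoint.symm
  refine ⟨insert (v, l) P, ?_, ?_, ?_⟩
  · rintro p (rfl | hp)
    · exact ⟨hl, hne⟩
    · exact ⟨(hP p hp).1.mono Finset.sdiff_subset, (hP p hp).2⟩
  · exact Set.pairwise_insert.2
      ⟨hPw, fun q hq _ => ⟨hdisj q hq, (hdisj q hq).1.symm, (hdisj q hq).2.symm⟩⟩
  · intro e' he'
    by_cases hl' : e' ∈ edgeFinset l
    · exact ⟨(v, l), Set.mem_insert _ _, hl'⟩
    · obtain ⟨p, hp, he'p⟩ := hPcov e' (Finset.mem_sdiff.2 ⟨he', hl'⟩)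
      exact ⟨p, Set.mem_insert_of_mem _ hp, he'p⟩

end Trails

end Multigraph

theorem Fin.sum_castSucc_eq_sum_succ {M : Type*} [AddCancelCommMonoid M] {k : ℕ}
    (f : Fin (k + 1) → M) (h : f 0 = f (Fin.last k)) :
    ∑ i : Fin k, f i.castSucc = ∑ i : Fin k, f i.succ := by
  have := (Fin.sum_univ_castSucc f).symm.trans (Fin.sum_univ_succ f)
  rw [h, add_comm (f _)] at this
  exact add_right_cancel this

namespace Hypergraph'

variable {H : Hypergraph'}

lemma Walk.IsClosedTrail.even_ncard_edges_at {W : H.Walk} (hW : W.IsClosedTrail) (v : H.V) :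
    Even {e | ∃ i, W.edge i = e ∧ (W.vtx i.castSucc = v ∨ W.vtx i.succ = v)}.ncard := by
  obtain ⟨hinj, h0, -⟩ := hW
  have hset : {e | ∃ i, W.edge i = e ∧ (W.vtx i.castSucc = v ∨ W.vtx i.succ = v)} =
      W.edge '' {i | W.vtx i.castSucc = v ∨ W.vtx i.succ = v} := by
    ext e
    simp only [Set.mem_ofPred_eq, Set.mem_image]
    exact exists_congr fun i => and_comm
  have hsplit : ∀ i : Fin W.k, (if W.vtx i.castSucc = v ∨ W.vtx i.succ = v then 1 else 0) =
      (if W.vtx i.castSucc = v then 1 else 0) + if W.vtx i.succ = v then 1 else 0 := by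
    intro i
    have := W.ne i
    split_ifs <;> simp_all
  rw [hset, Set.ncard_image_of_injective _ hinj, Set.ncard_eq_toFinset_card', Set.toFinset_ofPred,
    Finset.card_filter, Finset.sum_congr rfl fun i _ => hsplit i, Finset.sum_add_distrib,
    Fin.sum_castSucc_eq_sum_succ (fun j => if W.vtx j = v then 1 else 0) (by simp only [h0])]
  exact ⟨_, rfl⟩

section IncidenceSubgraph

variable {G : SimpleGraph (H.V ⊕ H.E)}

lemma mem_of_adj_of_le_incidenceGraph (hG : G ≤ H.incidenceGraph) {v : H.V} {e : H.E}
    (h : G.Adj (Sum.inl v) (Sum.inr e)) : v ∈ H.mem e := by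
  simpa [incidenceGraph] using hG h

lemma sdeg_inl_eq_ncard (hG : G ≤ H.incidenceGraph) (v : H.V) :
    sdeg G (Sum.inl v) = {e | G.Adj (Sum.inl v) (Sum.inr e)}.ncard := by
  have : G.neighborSet (Sum.inl v) = Sum.inr '' {e | G.Adj (Sum.inl v) (Sum.inr e)} := by
    ext (v' | e)
    · simpa using fun h => by simpa [incidenceGraph] using hG h
    · simp
  rw [sdeg, this, Set.ncard_image_of_injective _ Sum.inr_injective]

lemma sdeg_inr_eq_ncard (hG : G ≤ H.incidenceGraph) (e : H.E) :
    sdeg G (Sum.inr e) = {v | G.Adj (Sum.inl v) (Sum.inr e)}.ncard := by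
  have : G.neighborSet (Sum.inr e) = Sum.inl '' {v | G.Adj (Sum.inl v) (Sum.inr e)} := by
    ext (v | e')
    · simp [G.adj_comm]
    · simpa using fun h => by simpa [incidenceGraph] using hG h
  rw [sdeg, this, Set.ncard_image_of_injective _ Sum.inl_injective]

end IncidenceSubgraph

section EulerFamily

variable {F : Set H.Walk} {W W' : H.Walk} {v : H.V} {e : H.E}

lemma eulerSubgraph_adj_inl_inr :
    (H.eulerSubgraph F).Adj (Sum.inl v) (Sum.inr e) ↔ H.ConsecIn F v e := by
  simp [eulerSubgraph]

lemma eulerSubgraph_le_incidenceGraph (F : Set H.Walk) :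
    H.eulerSubgraph F ≤ H.incidenceGraph := by
  have hmem : ∀ v e, H.ConsecIn F v e → v ∈ H.mem e := by
    rintro v e ⟨W, -, i, rfl, rfl | rfl⟩
    exacts [W.mem_left i, W.mem_right i]
  rintro x y (⟨v, e, rfl, rfl, h⟩ | ⟨v, e, rfl, rfl, h⟩)
  exacts [Or.inl ⟨v, e, rfl, rfl, hmem v e h⟩, Or.inr ⟨v, e, rfl, rfl, hmem v e h⟩]

lemma ConsecIn.exists_mem_anchors (h : H.ConsecIn F v e) : ∃ W ∈ F, v ∈ W.anchors := by
  obtain ⟨W, hW, i, -, h⟩ := h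
  exact ⟨W, hW, h.elim (⟨_, ·⟩) (⟨_, ·⟩)⟩

lemma IsEulerFamily.eq_of_mem_edgeSet (hF : H.IsEulerFamily F) (hW : W ∈ F) (hW' : W' ∈ F)
    (he : e ∈ W.edgeSet) (he' : e ∈ W'.edgeSet) : W = W' := by
  by_contra hne
  exact Set.disjoint_left.1 (hF.2.1 W hW W' hW' hne).2 he he'

lemma IsEulerFamily.eq_of_mem_anchors (hF : H.IsEulerFamily F) (hW : W ∈ F) (hW' : W' ∈ F)
    (hv : v ∈ W.anchors) (hv' : v ∈ W'.anchors) : W = W' := by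
  by_contra hne
  exact Set.disjoint_left.1 (hF.2.1 W hW W' hW' hne).1 hv hv'

lemma IsEulerFamily.consecIn_edge_iff (hF : H.IsEulerFamily F) (hW : W ∈ F) (i : Fin W.k) :
    H.ConsecIn F v (W.edge i) ↔ v = W.vtx i.castSucc ∨ v = W.vtx i.succ := by
  refine ⟨?_, fun hv => ⟨W, hW, i, rfl, hv.imp Eq.symm Eq.symm⟩⟩
  rintro ⟨W', hW', i', hi', hv⟩
  obtain rfl := hF.eq_of_mem_edgeSet hW' hW ⟨i', hi'⟩ ⟨i, rfl⟩
  obtain rfl := (hF.1 W' hW').1 hi'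
  exact hv.imp Eq.symm Eq.symm

lemma IsEulerFamily.consecIn_iff_of_mem_anchors (hF : H.IsEulerFamily F) (hW : W ∈ F)
    (hv : v ∈ W.anchors) :
    H.ConsecIn F v e ↔ ∃ i, W.edge i = e ∧ (W.vtx i.castSucc = v ∨ W.vtx i.succ = v) := by
  refine ⟨fun ⟨W', hW', i, hi, hvi⟩ => ?_, fun h => ⟨W, hW, h⟩⟩
  obtain rfl := hF.eq_of_mem_anchors hW hW' hv (hvi.elim (⟨_, ·⟩) (⟨_, ·⟩))
  exact ⟨i, hi, hvi⟩

lemma IsEulerFamily.sdeg_eulerSubgraph_inr (hF : H.IsEulerFamily F) (e : H.E) :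
    sdeg (H.eulerSubgraph F) (Sum.inr e) = 2 := by
  obtain ⟨W, hW, i, rfl⟩ := hF.2.2 e
  rw [sdeg_inr_eq_ncard (eulerSubgraph_le_incidenceGraph F)]
  simp_rw [eulerSubgraph_adj_inl_inr, hF.consecIn_edge_iff hW]
  exact Set.ncard_pair (W.ne i)

lemma IsEulerFamily.even_sdeg_eulerSubgraph_inl (hF : H.IsEulerFamily F) (v : H.V) :
    Even (sdeg (H.eulerSubgraph F) (Sum.inl v)) := by
  rw [sdeg_inl_eq_ncard (eulerSubgraph_le_incidenceGraph F)]
  simp_rw [eulerSubgraph_adj_inl_inr]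
  by_cases hv : ∃ W ∈ F, v ∈ W.anchors
  · obtain ⟨W, hW, hvW⟩ := hv
    simp_rw [hF.consecIn_iff_of_mem_anchors hW hvW]
    exact (hF.1 W hW).even_ncard_edges_at v
  · have : {e | H.ConsecIn F v e} = ∅ :=
      Set.eq_empty_of_forall_notMem fun e h => hv h.exists_mem_anchors
    simp [this]

end EulerFamily

section FromDarts

open Multigraph

variable {u w : H.E → H.V} (hu : ∀ e, u e ∈ H.mem e) (hw : ∀ e, w e ∈ H.mem e)
  (huw : ∀ e, u e ≠ w e)

def walkOfDarts {v : H.V} {l : List (H.E × Bool)} (hl : IsWalkFrom u w v l) : H.Walk where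
  k := l.length
  vtx i := walkEnd u w v (l.take i)
  edge i := l[i].1
  mem_left i := by
    rw [Fin.val_castSucc, walkEnd_take_eq_src hl i.isLt]
    exact (src_eq_or l[i]).elim (· ▸ hu _) (· ▸ hw _)
  mem_right i := by
    rw [Fin.val_succ, walkEnd_take_add_one_eq_tgt i.isLt]
    exact (tgt_eq_or l[i]).elim (· ▸ hu _) (· ▸ hw _)
  ne i := by
    rw [Fin.val_castSucc, Fin.val_succ, walkEnd_take_eq_src hl i.isLt,
      walkEnd_take_add_one_eq_tgt i.isLt]
    exact src_ne_tgt huw _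

variable {hu hw huw} {v : H.V} {l : List (H.E × Bool)} {hl : IsWalkFrom u w v l}

lemma anchors_walkOfDarts : (walkOfDarts hu hw huw hl).anchors = anchors u w v l := rfl

lemma edgeSet_walkOfDarts : (walkOfDarts hu hw huw hl).edgeSet = edgeFinset l := by
  ext e
  simp [Walk.edgeSet, walkOfDarts, edgeFinset, List.mem_iff_getElem, Fin.exists_iff, eq_comm]

lemma isClosedTrail_walkOfDarts {S : Finset H.E} (h : IsClosedTrailIn u w S v l)
    (hne : l ≠ []) :
    (walkOfDarts hu hw huw h.1.1).IsClosedTrail := by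
  refine ⟨fun i j hij => ?_, ?_, ?_⟩
  · have hi : (i : ℕ) < (l.map Prod.fst).length := by rw [List.length_map]; exact i.isLt
    have hj : (j : ℕ) < (l.map Prod.fst).length := by rw [List.length_map]; exact j.isLt
    exact Fin.ext ((h.1.2.1.getElem_inj_iff (hi := hi) (hj := hj)).1
      (by simpa [walkOfDarts] using hij))
  · show walkEnd u w v (l.take 0) = walkEnd u w v (l.take l.length)
    rw [List.take_zero, List.take_length, h.2, walkEnd_nil]
  · exact h.two_le_length huw hne

end FromDarts

theorem isQuasiEulerian_of_even_degree {u w : H.E → H.V} (hu : ∀ e, u e ∈ H.mem e)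
    (hw : ∀ e, w e ∈ H.mem e) (huw : ∀ e, u e ≠ w e)
    (h : ∀ v, Even (Multigraph.degree u w Finset.univ v)) :
    H.IsQuasiEulerian := by
  obtain ⟨P, hP, hPw, hcov⟩ := Multigraph.exists_closedTrail_decomposition Finset.univ h
  refine Or.inr ⟨Set.range fun p : P => walkOfDarts hu hw huw (hP p p.2).1.1.1, ?_, ?_, ?_⟩
  · rintro _ ⟨p, rfl⟩
    exact isClosedTrail_walkOfDarts (hP p p.2).1 (hP p p.2).2
  · rintro _ ⟨p, rfl⟩ _ ⟨q, rfl⟩ hne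
    have hpq : (p : H.V × List (H.E × Bool)) ≠ q := by
      rintro h
      obtain rfl := Subtype.ext h
      exact hne rfl
    rw [anchors_walkOfDarts, anchors_walkOfDarts, edgeSet_walkOfDarts, edgeSet_walkOfDarts,
      Finset.disjoint_coe]
    exact hPw p.2 q.2 hpq
  · intro e
    obtain ⟨p, hp, he⟩ := hcov e (Finset.mem_univ e)
    exact ⟨_, ⟨⟨p, hp⟩, rfl⟩, by rw [edgeSet_walkOfDarts]; exact he⟩

lemma exists_ends_of_sdeg_inr_eq_two {G : SimpleGraph (H.V ⊕ H.E)} (hG : G ≤ H.incidenceGraph)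
    (h2 : ∀ e, sdeg G (Sum.inr e) = 2) :
    ∃ u w : H.E → H.V, (∀ e, u e ∈ H.mem e) ∧ (∀ e, w e ∈ H.mem e) ∧ (∀ e, u e ≠ w e) ∧
      ∀ v, sdeg G (Sum.inl v) = Multigraph.degree u w Finset.univ v := by
  choose u w huw hset using fun e =>
    Set.ncard_eq_two.1 ((sdeg_inr_eq_ncard hG e).symm.trans (h2 e))
  have hadj : ∀ v e, G.Adj (Sum.inl v) (Sum.inr e) ↔ u e = v ∨ w e = v := fun v e => by
    rw [← Set.mem_ofPred_eq (p := fun v => G.Adj (Sum.inl v) (Sum.inr e)), hset]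
    simp [eq_comm]
  refine ⟨u, w, fun e => mem_of_adj_of_le_incidenceGraph hG ((hadj _ e).2 (Or.inl rfl)),
    fun e => mem_of_adj_of_le_incidenceGraph hG ((hadj _ e).2 (Or.inr rfl)), huw, fun v => ?_⟩
  simp_rw [sdeg_inl_eq_ncard hG, hadj, Set.ncard_eq_toFinset_card', Set.toFinset_ofPred,
    Finset.card_filter, Multigraph.degree]
  refine Finset.sum_congr rfl fun e _ => ?_
  have := huw e
  split_ifs <;> simp_all

end Hypergraph'

/-- Theorem 4.1(1): `H` is quasi-eulerian iff its incidence graph has a spanning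
subgraph in which every e-vertex has degree `2` and every v-vertex has even degree. -/
theorem quasiEulerian_iff_spanning_subgraph (H : Hypergraph') :
    H.IsQuasiEulerian ↔
      ∃ G' : SimpleGraph (H.V ⊕ H.E), G' ≤ H.incidenceGraph ∧
        (∀ e : H.E, sdeg G' (Sum.inr e) = 2) ∧
        (∀ v : H.V, Even (sdeg G' (Sum.inl v))) := by
  constructor
  · rintro (hE | ⟨F, hF⟩)
    · exact ⟨⊥, bot_le, hE.elim, fun v => by simp [sdeg]⟩
    · exact ⟨H.eulerSubgraph F, H.eulerSubgraph_le_incidenceGraph F,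
        hF.sdeg_eulerSubgraph_inr, hF.even_sdeg_eulerSubgraph_inl⟩
  · rintro ⟨G', hG', h2, heven⟩
    obtain ⟨u, w, hu, hw, huw, hdeg⟩ := H.exists_ends_of_sdeg_inr_eq_two hG' h2
    exact H.isQuasiEulerian_of_even_degree hu hw huw fun v => hdeg v ▸ heven v
end

section
/- Let G be a finite connected loopless multigraph. If G has a block with k ≥ 2 vertices, then G has at least k vertices that are not cut vertices of G. -/
open scoped Classical

namespace Hypergraph'

/-- Two vertices of a hypergraph are connected if some walk joins them. -/
def ConnectedTo (H : Hypergraph') (u v : H.V) : Prop :=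
  ∃ W : H.Walk, W.vtx 0 = u ∧ W.vtx (Fin.last W.k) = v

/-- A hypergraph is connected if every two vertices are joined by a walk. -/
def ConnectedH (H : Hypergraph') : Prop := ∀ u v : H.V, H.ConnectedTo u v

/-- `u` and `v` are joined by a walk none of whose anchors is `w`. -/
def ConnectedAvoiding (H : Hypergraph') (w u v : H.V) : Prop :=
  ∃ W : H.Walk, W.vtx 0 = u ∧ W.vtx (Fin.last W.k) = v ∧ ∀ i, W.vtx i ≠ w

/-- A cut vertex of a hypergraph: a vertex whose deletion increases the number
of connected components, i.e. some two other vertices are connected in `H` but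
not by a walk avoiding it. -/
def IsCutVertex (H : Hypergraph') (v : H.V) : Prop :=
  ∃ x y : H.V, x ≠ v ∧ y ≠ v ∧ H.ConnectedTo x y ∧ ¬ H.ConnectedAvoiding v x y

/-- A subgraph (subhypergraph) of `H`: a set of vertices together with a set of
edges whose vertices all belong to the chosen vertex set. -/
structure Sub (H : Hypergraph') where
  verts : Set H.V
  edges : Set H.E
  mem_sub : ∀ e ∈ edges, ↑(H.mem e) ⊆ verts

/-- A walk of `H` lying entirely in the subgraph `S`. -/
def Sub.WalkIn {H : Hypergraph'} (S : H.Sub) (W : H.Walk) : Prop :=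
  (∀ i, W.vtx i ∈ S.verts) ∧ ∀ i, W.edge i ∈ S.edges

/-- Connectivity of two vertices within a subgraph. -/
def Sub.ConnIn {H : Hypergraph'} (S : H.Sub) (u v : H.V) : Prop :=
  ∃ W : H.Walk, S.WalkIn W ∧ W.vtx 0 = u ∧ W.vtx (Fin.last W.k) = v

/-- A subgraph is connected if it is nonempty and each two of its vertices are
joined by a walk inside it. -/
def Sub.ConnectedIn {H : Hypergraph'} (S : H.Sub) : Prop :=
  S.verts.Nonempty ∧ ∀ u ∈ S.verts, ∀ v ∈ S.verts, S.ConnIn u v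

/-- A cut vertex of the subgraph `S` (a cut vertex "of its own"). -/
def Sub.IsCutVertexIn {H : Hypergraph'} (S : H.Sub) (w : H.V) : Prop :=
  w ∈ S.verts ∧ ∃ x ∈ S.verts, ∃ y ∈ S.verts, x ≠ w ∧ y ≠ w ∧ S.ConnIn x y ∧
    ¬ ∃ W : H.Walk, S.WalkIn W ∧ W.vtx 0 = x ∧ W.vtx (Fin.last W.k) = y ∧
      ∀ i, W.vtx i ≠ w

/-- A block of `H`: a maximal connected subgraph having no cut vertex of its own. -/
def IsBlock (H : Hypergraph') (B : H.Sub) : Prop :=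
  B.ConnectedIn ∧ (∀ w, ¬ B.IsCutVertexIn w) ∧
    ∀ B' : H.Sub, B'.ConnectedIn → (∀ w, ¬ B'.IsCutVertexIn w) →
      B.verts ⊆ B'.verts → B.edges ⊆ B'.edges → B.verts = B'.verts ∧ B.edges = B'.edges

end Hypergraph'

/-!
Pass to the underlying simple graph `G`. Let `u` be a vertex of the block `B` that is a cut
vertex of `G`. As `B` has no cut vertex of its own, `B - u` lies in a single component of
`G - u`, so some other component of `G - u` is nonempty. A vertex `w` of those other components
at maximal distance from `u` is not a cut vertex of `G`: if a shortest path from `u` to `x`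
passed through `w`, its part after `w` would stay in those components and `x` would be farther
from `u` than `w`. Such a `w` lies outside `B`, and it determines `u`: were it attached to two
cut vertices `u ≠ u'` of `B`, a path from `w` to `u` avoiding `u'` would join `w` to `B` in
`G - u'`, and otherwise its initial segment up to `u'` would join `w` to `B` in `G - u`.
Sending non-cut vertices of `B` to themselves and cut vertices `u` to such a `w` therefore
injects `B` into the set of non-cut vertices.
-/

open SimpleGraph

namespace SimpleGraph

variable {V : Type*} {G : SimpleGraph V} {u u' v w x b z : V}

theorem reachable_deleteIncidenceSet_of_notMem_support (p : G.Walk u v) (hw : w ∉ p.support) :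
    (G.deleteIncidenceSet w).Reachable u v := by
  induction p with
  | nil => rfl
  | cons h q ih =>
    simp only [Walk.support_cons, List.mem_cons, not_or] at hw
    have hq : _ ≠ w := fun h' => hw.2 (h' ▸ q.start_mem_support)
    exact (deleteIncidenceSet_adj.2 ⟨h, Ne.symm hw.1, hq⟩).reachable.trans (ih hw.2)

theorem reachable_deleteIncidenceSet_iff (hu : u ≠ w) :
    (G.deleteIncidenceSet w).Reachable u v ↔ ∃ p : G.Walk u v, w ∉ p.support := by
  refine ⟨?_, fun ⟨p, hp⟩ => reachable_deleteIncidenceSet_of_notMem_support p hp⟩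
  rintro ⟨p⟩
  induction p with
  | nil => exact ⟨.nil, by simpa using hu.symm⟩
  | cons h _ ih =>
    rw [deleteIncidenceSet_adj] at h
    obtain ⟨q, hq⟩ := ih h.2.2
    exact ⟨.cons h.1 q, by simp [hq, hu.symm]⟩

theorem reachable_deleteIncidenceSet_of_forall_dist_le (hG : G.Connected) (hwu : w ≠ u)
    (hwb : ¬ (G.deleteIncidenceSet u).Reachable w b)
    (hmax : ∀ z, z ≠ u → ¬ (G.deleteIncidenceSet u).Reachable z b → G.dist u z ≤ G.dist u w)
    (hxw : x ≠ w) : (G.deleteIncidenceSet w).Reachable u x := by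
  obtain ⟨p, hp, hlen⟩ := hG.exists_path_of_dist u x
  by_cases hwp : w ∈ p.support
  · have hlt : G.dist u w < G.dist u x :=
      hlen ▸ (dist_le _).trans_lt (p.length_takeUntil_lt_length hwp hxw.symm)
    have hxu : x ≠ u := by rintro rfl; simp at hlt
    have hwp' : w ∈ p.reverse.support := by simpa using hwp
    have hx : (G.deleteIncidenceSet u).Reachable x w :=
      reachable_deleteIncidenceSet_of_notMem_support _
        (Walk.endpoint_notMem_support_takeUntil hp.reverse hwp' hwu.symm)
    exact absurd (hmax x hxu fun hxb => hwb (hx.symm.trans hxb)) (not_le.2 hlt)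
  · exact reachable_deleteIncidenceSet_of_notMem_support p hwp

theorem exists_not_isCutVtx_of_not_reachable_deleteIncidenceSet [Finite V] (hG : G.Connected)
    (hzu : z ≠ u) (hzb : ¬ (G.deleteIncidenceSet u).Reachable z b) :
    ∃ w, w ≠ u ∧ ¬ (G.deleteIncidenceSet u).Reachable w b ∧ ¬ IsCutVtx G w := by
  obtain ⟨w, ⟨hwu, hwb⟩, hmax⟩ := Set.exists_max_image
    {z | z ≠ u ∧ ¬ (G.deleteIncidenceSet u).Reachable z b} (G.dist u) (Set.toFinite _)
    ⟨z, hzu, hzb⟩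
  refine ⟨w, hwu, hwb, ?_⟩
  rintro ⟨x, y, hxw, hyw, -, hxy⟩
  have hreach {x : V} := reachable_deleteIncidenceSet_of_forall_dist_le (x := x) hG hwu hwb
    (fun z h₁ h₂ => hmax z ⟨h₁, h₂⟩)
  exact hxy ((reachable_deleteIncidenceSet_iff hxw).1 ((hreach hxw).symm.trans (hreach hyw)))

theorem reachable_deleteIncidenceSet_of_not_reachable (hG : G.Connected) (hu : u ≠ u')
    (hw : ¬ (G.deleteIncidenceSet u).Reachable w u') :
    (G.deleteIncidenceSet u').Reachable w u := by
  obtain ⟨p, hp⟩ := hG.exists_isPath w u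
  by_cases hu' : u' ∈ p.support
  · exact absurd (reachable_deleteIncidenceSet_of_notMem_support _
      (Walk.endpoint_notMem_support_takeUntil hp hu' hu)) hw
  · exact reachable_deleteIncidenceSet_of_notMem_support p hu'

theorem ncard_le_ncard_setOf_not_isCutVtx [Finite V] (hG : G.Connected) {B : Set V}
    (hB : B.Nontrivial) (hBu : ∀ u ∈ B, ∀ x ∈ B, ∀ y ∈ B, x ≠ u → y ≠ u →
      (G.deleteIncidenceSet u).Reachable x y) :
    B.ncard ≤ {v | ¬ IsCutVtx G v}.ncard := by
  have hcut : ∀ u ∈ B, IsCutVtx G u → ∃ w, ¬ IsCutVtx G w ∧ w ≠ u ∧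
      ∀ x ∈ B, x ≠ u → ¬ (G.deleteIncidenceSet u).Reachable w x := by
    rintro u hu ⟨x, y, hxu, hyu, -, hxy⟩
    rw [← reachable_deleteIncidenceSet_iff hxu] at hxy
    obtain ⟨b, hb, hbu⟩ := hB.exists_ne u
    obtain ⟨z, hzu, hzb⟩ : ∃ z, z ≠ u ∧ ¬ (G.deleteIncidenceSet u).Reachable z b := by
      by_cases hxb : (G.deleteIncidenceSet u).Reachable x b
      · exact ⟨y, hyu, fun hyb => hxy (hxb.trans hyb.symm)⟩
      · exact ⟨x, hxu, hxb⟩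
    obtain ⟨w, hwu, hwb, hw⟩ := exists_not_isCutVtx_of_not_reachable_deleteIncidenceSet hG hzu hzb
    exact ⟨w, hw, hwu, fun x hx hxu hwx => hwb (hwx.trans (hBu u hu x hx b hb hxu hbu))⟩
  choose! g hg using hcut
  refine Set.ncard_le_ncard_of_injOn (fun u => if IsCutVtx G u then g u else u) ?_ ?_
  · intro u hu
    by_cases h : IsCutVtx G u <;> simp [h, (hg u hu · |>.1)]
  · intro u hu u' hu' heq
    by_cases h : IsCutVtx G u <;> by_cases h' : IsCutVtx G u' <;> simp only [h, h', if_true,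
      if_false] at heq
    · by_contra hne
      exact (hg u' hu' h').2.2 u hu hne <| heq ▸
        reachable_deleteIncidenceSet_of_not_reachable hG hne ((hg u hu h).2.2 u' hu' (Ne.symm hne))
    · exact absurd .rfl ((hg u hu h).2.2 _ (heq ▸ hu') (heq ▸ (hg u hu h).2.1))
    · exact absurd .rfl ((hg u' hu' h').2.2 _ (heq ▸ hu) (heq ▸ (hg u' hu' h').2.1))
    · exact heq

end SimpleGraph

namespace Hypergraph'

variable {H : Hypergraph'} {u v w : H.V}

def adjGraph (H : Hypergraph') : SimpleGraph H.V where
  Adj a b := a ≠ b ∧ ∃ e, a ∈ H.mem e ∧ b ∈ H.mem e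
  symm := ⟨fun _ _ ⟨h, e, ha, hb⟩ => ⟨h.symm, e, hb, ha⟩⟩
  loopless := ⟨fun _ h => h.1 rfl⟩

noncomputable def Walk.ofAdjGraph (p : H.adjGraph.Walk u v) : H.Walk where
  k := p.length
  vtx i := p.getVert i
  edge i := (p.adj_getVert_succ i.2).2.choose
  mem_left i := (p.adj_getVert_succ i.2).2.choose_spec.1
  mem_right i := (p.adj_getVert_succ i.2).2.choose_spec.2
  ne i := (p.adj_getVert_succ i.2).1

theorem Walk.adj_adjGraph (W : H.Walk) (i : Fin W.k) :
    H.adjGraph.Adj (W.vtx i.castSucc) (W.vtx i.succ) :=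
  ⟨W.ne i, W.edge i, W.mem_left i, W.mem_right i⟩

theorem Walk.reachable {K : SimpleGraph H.V} (W : H.Walk)
    (hW : ∀ i : Fin W.k, K.Adj (W.vtx i.castSucc) (W.vtx i.succ)) :
    K.Reachable (W.vtx 0) (W.vtx (Fin.last W.k)) :=
  Fin.induction (motive := fun i => K.Reachable (W.vtx 0) (W.vtx i)) .rfl
    (fun i h => h.trans (hW i).reachable) _

theorem connectedTo_iff_reachable : H.ConnectedTo u v ↔ H.adjGraph.Reachable u v := by
  refine ⟨fun ⟨W, h0, hl⟩ => h0 ▸ hl ▸ W.reachable W.adj_adjGraph, fun ⟨p⟩ => ?_⟩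
  exact ⟨Walk.ofAdjGraph p, p.getVert_zero, p.getVert_length⟩

theorem connectedAvoiding_iff_reachable_deleteIncidenceSet (hu : u ≠ w) :
    H.ConnectedAvoiding w u v ↔ (H.adjGraph.deleteIncidenceSet w).Reachable u v := by
  rw [reachable_deleteIncidenceSet_iff hu]
  refine ⟨fun ⟨W, h0, hl, hW⟩ => ?_, fun ⟨p, hp⟩ => ?_⟩
  · rw [← reachable_deleteIncidenceSet_iff hu, ← h0, ← hl]
    exact W.reachable fun i => deleteIncidenceSet_adj.2 ⟨W.adj_adjGraph i, hW _, hW _⟩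
  · exact ⟨Walk.ofAdjGraph p, p.getVert_zero, p.getVert_length,
      fun i h => hp (h ▸ p.getVert_mem_support i)⟩

theorem connected_adjGraph (hconn : H.ConnectedH) : H.adjGraph.Connected :=
  ⟨fun u v => connectedTo_iff_reachable.1 (hconn u v)⟩

theorem isCutVtx_adjGraph_iff : IsCutVtx H.adjGraph v ↔ H.IsCutVertex v := by
  refine exists₂_congr fun x y => and_congr_right fun hx => and_congr_right fun _ =>
    and_congr connectedTo_iff_reachable.symm (not_congr ?_)
  rw [connectedAvoiding_iff_reachable_deleteIncidenceSet hx, reachable_deleteIncidenceSet_iff hx]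

theorem Sub.reachable_deleteIncidenceSet {B : H.Sub} (hB : B.ConnectedIn)
    (hcut : ∀ w, ¬ B.IsCutVertexIn w) {x y : H.V} (hu : u ∈ B.verts) (hx : x ∈ B.verts)
    (hy : y ∈ B.verts) (hxu : x ≠ u) (hyu : y ≠ u) :
    (H.adjGraph.deleteIncidenceSet u).Reachable x y := by
  by_contra hxy
  refine hcut u ⟨hu, x, hx, y, hy, hxu, hyu, hB.2 x hx y hy, fun ⟨W, _, h0, hl, hW⟩ => hxy ?_⟩
  exact (connectedAvoiding_iff_reachable_deleteIncidenceSet hxu).1 ⟨W, h0, hl, hW⟩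

end Hypergraph'

theorem block_noncut_vertices_general (H : Hypergraph')
    (hconn : H.ConnectedH) (B : H.Sub) (hB : H.IsBlock B) (k : ℕ) (hk : 2 ≤ k)
    (hcard : B.verts.ncard = k) :
    k ≤ {v : H.V | ¬ H.IsCutVertex v}.ncard := by
  have hBnt : B.verts.Nontrivial := Set.one_lt_ncard_iff_nontrivial.1 (by omega)
  calc k = B.verts.ncard := hcard.symm
    _ ≤ {v | ¬ IsCutVtx H.adjGraph v}.ncard :=
      ncard_le_ncard_setOf_not_isCutVtx (Hypergraph'.connected_adjGraph hconn) hBnt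
        fun _ hu _ hx _ hy => Hypergraph'.Sub.reachable_deleteIncidenceSet hB.1 hB.2.1 hu hx hy
    _ = {v : H.V | ¬ H.IsCutVertex v}.ncard := by simp only [Hypergraph'.isCutVtx_adjGraph_iff]

/-- Lemma 4.1: a finite connected loopless multigraph (here: a `2`-uniform
hypergraph) having a block with `k ≥ 2` vertices has at least `k` vertices
that are not cut vertices. -/
theorem block_noncut_vertices (H : Hypergraph') (hU : H.IsUniform 2)
    (hconn : H.ConnectedH) (B : H.Sub) (hB : H.IsBlock B) (k : ℕ) (hk : 2 ≤ k)
    (hcard : B.verts.ncard = k) :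
    k ≤ {v : H.V | ¬ H.IsCutVertex v}.ncard :=
  block_noncut_vertices_general H hconn B hB k hk hcard
end
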